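/- For every n ≥ 3 and every 1 < p < ∞ one has H'_α(ℓ_p^n) ≥ 4n − 4; that is, there exist 4n − 4 points on the unit sphere of ℓ_p^n forming a bounded and separated antipodal set with some constant d > 1. -/

import Mathlib

open Metric

noncomputable section

/-- `S` is a bounded and separated antipodal subset of `X` with constant `d`. -/
def IsBSA {X : Type*} [NormedAddCommGroup X] [NormedSpace ℝ X] (S : Set X) (d : ℝ) : Prop :=
  S ⊆ closedBall (0 : X) 1 ∧
    ∀ x ∈ S, ∀ y ∈ S, x ≠ y → ∃ f : X →L[ℝ] ℝ, ‖f‖ ≤ 1 ∧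
      d ≤ f x - f y ∧ ∀ z ∈ S, f y ≤ f z ∧ f z ≤ f x

/-- The strict antipodality condition (with gap `> 1`). -/
def StrictAntipProp {X : Type*} [NormedAddCommGroup X] [NormedSpace ℝ X] (S : Set X) : Prop :=
  ∀ x ∈ S, ∀ y ∈ S, x ≠ y → ∃ f : X →L[ℝ] ℝ, ‖f‖ ≤ 1 ∧
    1 < f x - f y ∧ ∀ z ∈ S, f y ≤ f z ∧ f z ≤ f x

/-- The strict antipodal Hadwiger number `H'_α(X)`. -/
def strictHalpha (X : Type*) [NormedAddCommGroup X] [NormedSpace ℝ X] : ℕ :=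
  sSup {k : ℕ | ∃ S : Finset X, S.card = k ∧ (S : Set X) ⊆ sphere (0 : X) 1 ∧
    StrictAntipProp (S : Set X)}

/-! The `4(n - 1)` points `±s e₀ ± t eᵢ` (`0 < i < n`) with `s ^ p + t ^ p = 1` lie on the unit
sphere of `ℓ_p^n`. Any two of them are separated by a norm-one functional that takes opposite
values `±m` at them and satisfies `|f| ≤ m` on the whole set: `±e₀*` when the signs at `e₀`
differ (`m = s`), `±eᵢ*` when only the signs at `eᵢ` differ (`m = t`), and
`2 ^ (1/p - 1) (±eᵢ* ∓ eⱼ*)` when the indices differ (`m = 2 ^ (1/p - 1) t`; its norm is `1` by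
the power mean inequality). All gaps `2m` exceed `1` once `(1/2) ^ p < s ^ p < 1/2`, which is
possible exactly because `p > 1`. A strictly antipodal set is `1`-separated, so compactness of
the sphere bounds the cardinalities in the supremum defining `H'_α`. -/

section Antipodal

variable {X : Type*} [NormedAddCommGroup X] [NormedSpace ℝ X]

theorem IsBSA.strictAntipProp {S : Set X} {d : ℝ} (h : IsBSA S d) (hd : 1 < d) :
    StrictAntipProp S := fun x hx y hy hxy ↦ by
  obtain ⟨f, hf, hgap, hsupp⟩ := h.2 x hx y hy hxy
  exact ⟨f, hf, hd.trans_le hgap, hsupp⟩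

theorem StrictAntipProp.isSeparated {S : Set X} (h : StrictAntipProp S) : IsSeparated 1 S := by
  intro x hx y hy hxy
  obtain ⟨f, hf, hgap, -⟩ := h x hx y hy hxy
  have : f x - f y ≤ dist x y := calc
    f x - f y ≤ ‖f (x - y)‖ := by rw [map_sub]; exact le_abs_self _
    _ ≤ ‖f‖ * ‖x - y‖ := f.le_opNorm _
    _ ≤ dist x y := by rw [dist_eq_norm]; exact mul_le_of_le_one_left (norm_nonneg _) hf
  rw [edist_dist, ENNReal.one_lt_ofReal]
  linarith

theorem bddAbove_card_strictAntipProp [ProperSpace X] :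
    BddAbove {k : ℕ | ∃ S : Finset X, S.card = k ∧ (S : Set X) ⊆ sphere (0 : X) 1 ∧
      StrictAntipProp (S : Set X)} := by
  obtain ⟨N, -, hNfin, hN⟩ :=
    exists_finite_isCover_of_isCompact (ε := 1 / 2) (by norm_num) (isCompact_sphere (0 : X) 1)
  refine ⟨hNfin.toFinset.card, ?_⟩
  rintro _ ⟨S, rfl, hS, hanti⟩
  have hpack : (S : Set X).encard ≤ N.encard := calc
    (S : Set X).encard ≤ packingNumber (2 * (1 / 2)) (sphere (0 : X) 1) := by
      rw [show (2 : NNReal) * (1 / 2) = 1 by norm_num]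
      exact hanti.isSeparated.encard_le_packingNumber hS
    _ ≤ externalCoveringNumber (1 / 2) (sphere (0 : X) 1) :=
      packingNumber_two_mul_le_externalCoveringNumber _ _
    _ ≤ N.encard := hN.externalCoveringNumber_le_encard
  rw [Set.encard_coe_eq_coe_finsetCard, hNfin.encard_eq_coe_toFinset_card] at hpack
  exact_mod_cast hpack

theorem card_le_strictHalpha [ProperSpace X] {S : Finset X} (hS : (S : Set X) ⊆ sphere 0 1)
    (h : StrictAntipProp (S : Set X)) : S.card ≤ strictHalpha X :=
  le_csSup bddAbove_card_strictAntipProp ⟨S, rfl, hS, h⟩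

def SymmSupports (f : X →L[ℝ] ℝ) (S : Set X) (x y : X) (m : ℝ) : Prop :=
  ‖f‖ ≤ 1 ∧ f x = m ∧ f y = -m ∧ ∀ z ∈ S, |f z| ≤ m

theorem isBSA_of_symmSupports {S : Set X} {M : ℝ} (hS : S ⊆ closedBall 0 1)
    (h : ∀ x ∈ S, ∀ y ∈ S, x ≠ y → ∃ f m, M ≤ m ∧ SymmSupports f S x y m) :
    IsBSA S (2 * M) := by
  refine ⟨hS, fun x hx y hy hxy ↦ ?_⟩
  obtain ⟨f, m, hM, hf, hfx, hfy, hslab⟩ := h x hx y hy hxy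
  refine ⟨f, hf, by linarith, fun z hz ↦ ?_⟩
  rw [hfx, hfy]
  exact abs_le.1 (hslab z hz)

end Antipodal

theorem Int.abs_cast_units {R : Type*} [Ring R] [LinearOrder R] [IsStrictOrderedRing R]
    (u : ℤˣ) : |((u : ℤ) : R)| = 1 := by
  rcases Int.units_eq_one_or u with rfl | rfl <;> simp

theorem Int.cast_units_mul_self {R : Type*} [Ring R] (u : ℤˣ) : ((u : ℤ) : R) * u = 1 := by
  rw [← Int.cast_mul, ← Units.val_mul, Int.units_mul_self, Units.val_one, Int.cast_one]

section LpSpace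

variable {ι : Type*} {p : ℝ}

local notation "ℓₚ" => PiLp (ENNReal.ofReal p) (fun _ : ι => ℝ)

section Norm

variable [Fintype ι] [Fact (1 ≤ ENNReal.ofReal p)]

theorem PiLp.norm_rpow_eq_sum_abs_rpow (x : ℓₚ) : ‖x‖ ^ p = ∑ i, |x i| ^ p := by
  have hp : 1 ≤ p := ENNReal.one_le_ofReal.1 Fact.out
  have hp' : (ENNReal.ofReal p).toReal = p := ENNReal.toReal_ofReal (by linarith)
  rw [PiLp.norm_eq_sum (by rw [hp']; linarith), hp', ← Real.rpow_mul (by positivity), one_div,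
    inv_mul_cancel₀ (by linarith), Real.rpow_one]
  simp only [Real.norm_eq_abs]

theorem PiLp.abs_add_abs_le {i j : ι} (hij : i ≠ j) (x : ℓₚ) :
    |x i| + |x j| ≤ 2 ^ (1 - 1 / p) * ‖x‖ := by
  classical
  have hp : 1 ≤ p := ENNReal.one_le_ofReal.1 Fact.out
  have hpow : (|x i| + |x j|) ^ p ≤ (2 ^ (1 - 1 / p) * ‖x‖) ^ p := calc
    (|x i| + |x j|) ^ p ≤ 2 ^ (p - 1) * (|x i| ^ p + |x j| ^ p) := by
      have := NNReal.rpow_add_le_mul_rpow_add_rpow ⟨|x i|, abs_nonneg _⟩ ⟨|x j|, abs_nonneg _⟩ hp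
      exact_mod_cast this
    _ ≤ 2 ^ (p - 1) * ‖x‖ ^ p := by
      gcongr
      rw [PiLp.norm_rpow_eq_sum_abs_rpow, ← Finset.sum_pair (f := fun k ↦ |x k| ^ p) hij]
      exact Finset.sum_le_sum_of_subset_of_nonneg (Finset.subset_univ _)
        fun k _ _ ↦ by positivity
    _ = (2 ^ (1 - 1 / p) * ‖x‖) ^ p := by
      rw [Real.mul_rpow (by positivity) (norm_nonneg _), ← Real.rpow_mul zero_le_two]
      congr 2
      field_simp
  exact (Real.rpow_le_rpow_iff (by positivity) (by positivity) (by linarith)).1 hpow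

theorem PiLp.norm_smul_proj_le {c : ℝ} (hc : |c| ≤ 1) (i : ι) :
    ‖c • PiLp.proj (𝕜 := ℝ) (ENNReal.ofReal p) (fun _ : ι => ℝ) i‖ ≤ 1 := by
  refine ContinuousLinearMap.opNorm_le_bound _ zero_le_one fun x ↦ ?_
  simp only [_root_.smul_apply, proj_apply, smul_eq_mul, norm_mul, Real.norm_eq_abs, one_mul]
  exact (mul_le_of_le_one_left (norm_nonneg _) hc).trans (PiLp.norm_apply_le x i)

theorem PiLp.norm_smul_proj_sub_smul_proj_le {c c' : ℝ} (hc : |c| ≤ 2 ^ (1 / p - 1))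
    (hc' : |c'| ≤ 2 ^ (1 / p - 1)) {i j : ι} (hij : i ≠ j) :
    ‖c • PiLp.proj (𝕜 := ℝ) (ENNReal.ofReal p) (fun _ : ι => ℝ) i -
      c' • PiLp.proj (𝕜 := ℝ) (ENNReal.ofReal p) (fun _ : ι => ℝ) j‖ ≤ 1 := by
  refine ContinuousLinearMap.opNorm_le_bound _ zero_le_one fun x ↦ ?_
  simp only [_root_.sub_apply, _root_.smul_apply, proj_apply, smul_eq_mul, Real.norm_eq_abs,
    one_mul]
  have h2 : (2 : ℝ) ^ (1 / p - 1) * 2 ^ (1 - 1 / p) = 1 := by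
    rw [← Real.rpow_add two_pos]; simp
  calc |c * x i - c' * x j| ≤ |c| * |x i| + |c'| * |x j| := by
        rw [← abs_mul, ← abs_mul]; exact abs_sub _ _
    _ ≤ 2 ^ (1 / p - 1) * (|x i| + |x j|) := by
        rw [mul_add]; gcongr
    _ ≤ 2 ^ (1 / p - 1) * (2 ^ (1 - 1 / p) * ‖x‖) := by
        gcongr; exact PiLp.abs_add_abs_le hij x
    _ = ‖x‖ := by rw [← mul_assoc, h2, one_mul]

end Norm

variable [DecidableEq ι] (p) (i₀ : ι) (s t : ℝ)

def antipodalPoint (a : ℤˣ × ℤˣ × {i // i ≠ i₀}) : ℓₚ :=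
  WithLp.toLp _ fun k ↦ if k = i₀ then a.1 * s else if k = a.2.2 then a.2.1 * t else 0

variable {p i₀ s t}

@[simp]
theorem antipodalPoint_apply_self (a : ℤˣ × ℤˣ × {i // i ≠ i₀}) :
    antipodalPoint p i₀ s t a i₀ = a.1 * s := if_pos rfl

theorem antipodalPoint_apply_of_ne (a : ℤˣ × ℤˣ × {i // i ≠ i₀}) {k : ι} (hk : k ≠ i₀) :
    antipodalPoint p i₀ s t a k = if k = a.2.2 then a.2.1 * t else 0 := if_neg hk

@[simp]
theorem antipodalPoint_apply_index (a : ℤˣ × ℤˣ × {i // i ≠ i₀}) :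
    antipodalPoint p i₀ s t a a.2.2 = a.2.1 * t := by
  rw [antipodalPoint_apply_of_ne a a.2.2.2, if_pos rfl]

theorem antipodalPoint_apply_of_ne_index (a : ℤˣ × ℤˣ × {i // i ≠ i₀}) {k : ι} (hk : k ≠ i₀)
    (hka : k ≠ a.2.2) : antipodalPoint p i₀ s t a k = 0 := by
  rw [antipodalPoint_apply_of_ne a hk, if_neg hka]

theorem abs_antipodalPoint_apply_of_ne (ht : 0 ≤ t) (a : ℤˣ × ℤˣ × {i // i ≠ i₀}) {k : ι}
    (hk : k ≠ i₀) : |antipodalPoint p i₀ s t a k| = if k = a.2.2 then t else 0 := by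
  rw [antipodalPoint_apply_of_ne a hk]
  split_ifs
  · rw [abs_mul, Int.abs_cast_units, one_mul, abs_of_nonneg ht]
  · exact abs_zero

theorem antipodalPoint_injective (hs : s ≠ 0) (ht : t ≠ 0) :
    Function.Injective (antipodalPoint p i₀ s t) := by
  rintro ⟨σ, τ, i⟩ ⟨σ', τ', i'⟩ h
  have hσ : σ = σ' := by
    have := congrArg (· i₀) h
    simpa [hs, Units.ext_iff] using this
  have hi : i = i' := by
    by_contra hii
    have := congrArg (· (i : ι)) h
    simp [antipodalPoint_apply_of_ne _ i.2, Subtype.val_injective.ne hii, ht] at this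
  subst hσ hi
  have := congrArg (· (i : ι)) h
  simp only [antipodalPoint_apply_of_ne _ i.2, ↓reduceIte, mul_eq_mul_right_iff, Int.cast_inj,
    ht, or_false] at this
  rw [Units.ext this]

variable [Fintype ι] [Fact (1 ≤ ENNReal.ofReal p)]

theorem norm_antipodalPoint (hs : 0 ≤ s) (ht : 0 ≤ t) (hst : s ^ p + t ^ p = 1)
    (a : ℤˣ × ℤˣ × {i // i ≠ i₀}) : ‖antipodalPoint p i₀ s t a‖ = 1 := by
  have hp : 0 < p := zero_lt_one.trans_le (ENNReal.one_le_ofReal.1 Fact.out)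
  have hsum : ‖antipodalPoint p i₀ s t a‖ ^ p = 1 ^ p := by
    rw [PiLp.norm_rpow_eq_sum_abs_rpow, Fintype.sum_eq_add i₀ a.2.2 a.2.2.2.symm, Real.one_rpow,
      ← hst]
    · rw [antipodalPoint_apply_self, abs_mul, Int.abs_cast_units, one_mul, abs_of_nonneg hs,
        abs_antipodalPoint_apply_of_ne ht a a.2.2.2, if_pos rfl]
    · rintro k ⟨hk, hka⟩
      rw [abs_antipodalPoint_apply_of_ne ht a hk, if_neg hka, Real.zero_rpow hp.ne']
  rwa [Real.rpow_left_inj (norm_nonneg _) zero_le_one hp.ne'] at hsum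

theorem exists_symmSupports_of_fst_ne (hs : 0 ≤ s) {a b : ℤˣ × ℤˣ × {i // i ≠ i₀}}
    (h : a.1 ≠ b.1) : ∃ f, SymmSupports f (Set.range (antipodalPoint p i₀ s t))
      (antipodalPoint p i₀ s t a) (antipodalPoint p i₀ s t b) s := by
  refine ⟨((a.1 : ℤ) : ℝ) • PiLp.proj (𝕜 := ℝ) _ _ i₀,
    PiLp.norm_smul_proj_le (Int.abs_cast_units _).le i₀, ?_, ?_, ?_⟩
  · simp [← mul_assoc, Int.cast_units_mul_self]
  · rw [Int.units_ne_iff_eq_neg.1 h]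
    simp [← mul_assoc, Int.cast_units_mul_self]
  · rintro _ ⟨c, rfl⟩
    simp [abs_mul, Int.abs_cast_units, abs_of_nonneg hs]

theorem exists_symmSupports_of_snd_ne (ht : 0 ≤ t) {a b : ℤˣ × ℤˣ × {i // i ≠ i₀}}
    (hi : a.2.2 = b.2.2) (h : a.2.1 ≠ b.2.1) :
    ∃ f, SymmSupports f (Set.range (antipodalPoint p i₀ s t))
      (antipodalPoint p i₀ s t a) (antipodalPoint p i₀ s t b) t := by
  refine ⟨((a.2.1 : ℤ) : ℝ) • PiLp.proj (𝕜 := ℝ) _ _ (a.2.2 : ι), ?_, ?_, ?_, ?_⟩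
  · exact PiLp.norm_smul_proj_le (Int.abs_cast_units _).le (a.2.2 : ι)
  · simp [← mul_assoc, Int.cast_units_mul_self]
  · rw [Int.units_ne_iff_eq_neg.1 h, hi]
    simp [← mul_assoc, Int.cast_units_mul_self]
  · rintro _ ⟨c, rfl⟩
    simp only [_root_.smul_apply, PiLp.proj_apply, smul_eq_mul, abs_mul, Int.abs_cast_units,
      one_mul, abs_antipodalPoint_apply_of_ne ht c a.2.2.2]
    split_ifs <;> simp [ht]

theorem exists_symmSupports_of_index_ne (ht : 0 ≤ t) {a b : ℤˣ × ℤˣ × {i // i ≠ i₀}}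
    (hi : a.2.2 ≠ b.2.2) : ∃ f, SymmSupports f (Set.range (antipodalPoint p i₀ s t))
      (antipodalPoint p i₀ s t a) (antipodalPoint p i₀ s t b) (2 ^ (1 / p - 1) * t) := by
  have hij : (a.2.2 : ι) ≠ b.2.2 := Subtype.val_injective.ne hi
  have hc : (0 : ℝ) < 2 ^ (1 / p - 1) := by positivity
  have habs (u : ℤˣ) : |2 ^ (1 / p - 1) * ((u : ℤ) : ℝ)| = 2 ^ (1 / p - 1) := by
    rw [abs_mul, Int.abs_cast_units, mul_one, abs_of_pos hc]
  refine ⟨(2 ^ (1 / p - 1) * ((a.2.1 : ℤ) : ℝ)) • PiLp.proj (𝕜 := ℝ) _ _ (a.2.2 : ι) -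
      (2 ^ (1 / p - 1) * ((b.2.1 : ℤ) : ℝ)) • PiLp.proj (𝕜 := ℝ) _ _ (b.2.2 : ι),
    PiLp.norm_smul_proj_sub_smul_proj_le (habs _).le (habs _).le hij, ?_, ?_, ?_⟩
  · simp [antipodalPoint_apply_of_ne_index a b.2.2.2 hij.symm, mul_assoc,
      ← mul_assoc (((a.2.1 : ℤ) : ℝ)), Int.cast_units_mul_self]
  · simp [antipodalPoint_apply_of_ne_index b a.2.2.2 hij, mul_assoc,
      ← mul_assoc (((b.2.1 : ℤ) : ℝ)), Int.cast_units_mul_self]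
  · rintro _ ⟨c, rfl⟩
    simp only [_root_.sub_apply, _root_.smul_apply, PiLp.proj_apply, smul_eq_mul]
    calc _ ≤ |2 ^ (1 / p - 1) * ((a.2.1 : ℤ) : ℝ) * antipodalPoint p i₀ s t c a.2.2| +
          |2 ^ (1 / p - 1) * ((b.2.1 : ℤ) : ℝ) * antipodalPoint p i₀ s t c b.2.2| := abs_sub _ _
      _ = 2 ^ (1 / p - 1) * ((if (a.2.2 : ι) = c.2.2 then t else 0) +
          if (b.2.2 : ι) = c.2.2 then t else 0) := by
        rw [abs_mul, habs, abs_mul, habs, abs_antipodalPoint_apply_of_ne ht c a.2.2.2,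
          abs_antipodalPoint_apply_of_ne ht c b.2.2.2, mul_add]
      _ ≤ 2 ^ (1 / p - 1) * t := by
        gcongr
        split_ifs with h₁ h₂ <;> first | exact absurd (h₁.trans h₂.symm) hij | simp [ht]

theorem isBSA_range_antipodalPoint (hs : 0 ≤ s) (ht : 0 ≤ t) (hst : s ^ p + t ^ p = 1) :
    IsBSA (Set.range (antipodalPoint p i₀ s t)) (2 * min s (2 ^ (1 / p - 1) * t)) := by
  have hp : 1 ≤ p := ENNReal.one_le_ofReal.1 Fact.out
  refine isBSA_of_symmSupports ?_ ?_
  · rintro _ ⟨a, rfl⟩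
    simp [norm_antipodalPoint hs ht hst]
  rintro _ ⟨a, rfl⟩ _ ⟨b, rfl⟩ hab
  by_cases hi : a.2.2 = b.2.2
  · by_cases hτ : a.2.1 = b.2.1
    · have hσ : a.1 ≠ b.1 := fun hσ ↦ hab (by rw [Prod.ext hσ (Prod.ext hτ hi)])
      exact (exists_symmSupports_of_fst_ne hs hσ).imp fun f hf ↦ ⟨s, min_le_left _ _, hf⟩
    · have hc : (2 : ℝ) ^ (1 / p - 1) ≤ 1 :=
        Real.rpow_le_one_of_one_le_of_nonpos one_le_two (by rw [sub_nonpos, div_le_one (by linarith)]; exact hp)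
      exact (exists_symmSupports_of_snd_ne ht hi hτ).imp fun f hf ↦
        ⟨t, (min_le_right _ _).trans (mul_le_of_le_one_left ht hc), hf⟩
  · exact (exists_symmSupports_of_index_ne ht hi).imp fun f hf ↦ ⟨_, min_le_right _ _, hf⟩

end LpSpace

theorem exists_rpow_add_rpow_eq_one_half_lt_min {p : ℝ} (hp : 1 < p) :
    ∃ s t : ℝ, 0 < s ∧ 0 < t ∧ s ^ p + t ^ p = 1 ∧ 1 / 2 < min s (2 ^ (1 / p - 1) * t) := by
  have hp0 : 0 < p := one_pos.trans hp
  have hhalf : (1 / 2 : ℝ) ^ p < 1 / 2 := Real.rpow_lt_self_of_lt_one (by norm_num) (by norm_num) hp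
  obtain ⟨a, ha, ha'⟩ := exists_between hhalf
  have ha0 : 0 < a := lt_of_le_of_lt (by positivity) ha
  refine ⟨a ^ p⁻¹, (1 - a) ^ p⁻¹, by positivity, Real.rpow_pos_of_pos (by linarith) _, ?_,
    lt_min ?_ ?_⟩
  · rw [Real.rpow_inv_rpow ha0.le hp0.ne', Real.rpow_inv_rpow (by linarith) hp0.ne']
    ring
  · calc (1 / 2 : ℝ) = ((1 / 2) ^ p) ^ p⁻¹ := (Real.rpow_rpow_inv (by norm_num) hp0.ne').symm
      _ < a ^ p⁻¹ := Real.rpow_lt_rpow (by positivity) ha (inv_pos.2 hp0)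
  · have h2 : 2 ^ (1 / p - 1) * (1 - a) ^ p⁻¹ = (2 * (1 - a)) ^ p⁻¹ / 2 := by
      rw [Real.rpow_sub_one two_ne_zero, Real.mul_rpow zero_le_two (by linarith), one_div]
      ring
    have h1 : 1 < (2 * (1 - a)) ^ p⁻¹ := Real.one_lt_rpow (by linarith) (inv_pos.2 hp0)
    rw [h2]
    linarith

/-- For every `n ≥ 3` and `1 < p < ∞`, `H'_α(ℓ_p^n) ≥ 4n − 4`: there
exist `4n − 4` points on the unit sphere of `ℓ_p^n` forming a bounded and separated
antipodal set with some constant `d > 1`. -/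
theorem strictHalpha_lp_ge (n : ℕ) (hn : 3 ≤ n) (p : ℝ) (hp : 1 < p)
    [Fact (1 ≤ ENNReal.ofReal p)] :
    (∃ S : Finset (PiLp (ENNReal.ofReal p) (fun _ : Fin n => ℝ)),
      S.card = 4 * n - 4 ∧
      (S : Set (PiLp (ENNReal.ofReal p) (fun _ : Fin n => ℝ))) ⊆ sphere 0 1 ∧
      ∃ d : ℝ, 1 < d ∧
        IsBSA (S : Set (PiLp (ENNReal.ofReal p) (fun _ : Fin n => ℝ))) d) ∧
    4 * n - 4 ≤ strictHalpha (PiLp (ENNReal.ofReal p) (fun _ : Fin n => ℝ)) := by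
  obtain ⟨s, t, hs, ht, hst, hgap⟩ := exists_rpow_add_rpow_eq_one_half_lt_min hp
  have hd : 1 < 2 * min s (2 ^ (1 / p - 1) * t) := by linarith
  let i₀ : Fin n := ⟨0, by omega⟩
  let S := Finset.univ.image (antipodalPoint p i₀ s t)
  have hS : ↑S = Set.range (antipodalPoint p i₀ s t) := by simp [S]
  have hcard : S.card = 4 * n - 4 := by
    rw [Finset.card_image_of_injective _ (antipodalPoint_injective hs.ne' ht.ne'),
      Finset.card_univ]
    simp only [Fintype.card_prod, Fintype.card_units_int, Fintype.card_subtype_compl,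
      Fintype.card_fin, Fintype.card_unique]
    omega
  have hsphere : ↑S ⊆ sphere (0 : PiLp (ENNReal.ofReal p) fun _ : Fin n => ℝ) 1 := by
    rw [hS]
    rintro _ ⟨a, rfl⟩
    simpa using norm_antipodalPoint hs.le ht.le hst a
  have hBSA := isBSA_range_antipodalPoint (i₀ := i₀) hs.le ht.le hst
  rw [← hS] at hBSA
  refine ⟨⟨S, hcard, hsphere, _, hd, hBSA⟩, ?_⟩
  exact hcard ▸ card_le_strictHalpha hsphere (hBSA.strictAntipProp hd)

end
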